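/- Let n ≥ 3, m ∈ ℕ, and let ω' ∈ ℝⁿ be a unit vector. Then there exists a polynomial function p : ℝⁿ → ℝ which is homogeneous of degree m (p(tz) = t^m p(z) for all t ∈ ℝ, z ∈ ℝⁿ), harmonic on all of ℝⁿ, and satisfies p(z) = |z|^m C_m^{(n−2)/2}(⟨z,ω'⟩/|z|) for every z ≠ 0. (Each summand in the multipole expansion of |z−z'|^{2−n} is a homogeneous harmonic polynomial in z.) -/

import Mathlib

open MeasureTheory Real Filter
open scoped RealInnerProductSpace

/-- The Gegenbauer (ultraspherical) polynomial
`C_m^λ(u) = Σ_{k=0}^{⌊m/2⌋} (−1)^k (Γ(λ+m−k)/(Γ(λ) k! (m−2k)!)) (2u)^{m−2k}`. -/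
noncomputable def gegenbauer (lam : ℝ) (m : ℕ) (u : ℝ) : ℝ :=
  ∑ k ∈ Finset.range (m / 2 + 1),
    (-1 : ℝ) ^ k *
      (Real.Gamma (lam + m - k) /
        (Real.Gamma lam * (Nat.factorial k : ℝ) * (Nat.factorial (m - 2 * k) : ℝ))) *
      (2 * u) ^ (m - 2 * k)

/-- The Laplacian `Δu = Σᵢ ∂²u/∂zᵢ²` of a function on `ℝⁿ`, computed as a sum of second
directional derivatives along the standard orthonormal basis of `EuclideanSpace ℝ (Fin n)`. -/
noncomputable def laplacianE (n : ℕ) (u : EuclideanSpace ℝ (Fin n) → ℝ)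
    (z : EuclideanSpace ℝ (Fin n)) : ℝ :=
  ∑ i : Fin n,
    fderiv ℝ (fun w => fderiv ℝ u w (EuclideanSpace.single i 1)) z (EuclideanSpace.single i 1)

/-! Write `s = ⟪z, ω'⟫`, `r = ‖z‖²` and `λ = (n - 2) / 2`. Expanding the Gegenbauer sum gives
`‖z‖ᵐ C_m^λ(s / ‖z‖) = ∑ₖ cₖ s^(m-2k) r^k` with `cₖ = (-1)ᵏ 2^(m-2k) Γ(λ+m-k) / (Γ(λ) k! (m-2k)!)`,
a homogeneous polynomial of degree `m`. Its Laplacian is computed termwise from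
`Δ(sᵃ rᵇ) = a(a-1)‖ω'‖² s^(a-2) rᵇ + 2b(2a+2b+n-2) sᵃ r^(b-1)`, and the two resulting series
cancel after shifting `k` by one, because `Γ(x + 1) = x Γ(x)` gives
`c_{k+1} · 4(k+1)(λ+m-k-1) = -cₖ (m-2k)(m-2k-1)`. -/

theorem natCast_mul_natCast_sub_one {R : Type*} [Ring R] (k : ℕ) :
    (k : R) * ((k - 1 : ℕ) : R) = k * (k - 1) := by
  cases k <;> simp

theorem natCast_mul_pow_sub_one_mul {R : Type*} [CommRing R] (k : ℕ) (x : R) :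
    (k : R) * x ^ (k - 1) * x = k * x ^ k := by
  cases k <;> simp [pow_succ, mul_assoc]

theorem natCast_mul_sub_one_mul_pow_sub_two_mul {R : Type*} [CommRing R] (k : ℕ) (x : R) :
    (k : R) * (k - 1) * x ^ (k - 2) * x = k * (k - 1) * x ^ (k - 1) := by
  rcases k with _ | _ | k <;> simp [pow_succ, mul_assoc]

open Nat in
noncomputable def gegenbauerCoeff (lam : ℝ) (m k : ℕ) : ℝ :=
  (-1) ^ k * (Real.Gamma (lam + m - k) / (Real.Gamma lam * k ! * (m - 2 * k)!)) * 2 ^ (m - 2 * k)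

theorem gegenbauer_eq_sum_gegenbauerCoeff (lam : ℝ) (m : ℕ) (u : ℝ) :
    gegenbauer lam m u =
      ∑ k ∈ Finset.range (m / 2 + 1), gegenbauerCoeff lam m k * u ^ (m - 2 * k) := by
  simp only [gegenbauer, gegenbauerCoeff, mul_pow, mul_assoc]

theorem gegenbauerCoeff_succ_mul {lam : ℝ} (hlam : 0 ≤ lam) {m k : ℕ} (hk : 2 * (k + 1) ≤ m) :
    gegenbauerCoeff lam m (k + 1) * (4 * (k + 1) * (lam + m - k - 1)) =
      -(gegenbauerCoeff lam m k * ((m - 2 * k : ℕ) * ((m - 2 * k : ℕ) - 1))) := by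
  obtain ⟨j, rfl⟩ : ∃ j, m = 2 * k + j + 2 := ⟨m - 2 * k - 2, by omega⟩
  have hpos : 0 < lam + j + k + 1 := by positivity
  have hGamma : Real.Gamma (lam + ↑(2 * k + j + 2) - k) =
      (lam + j + k + 1) * Real.Gamma (lam + ↑(2 * k + j + 2) - ↑(k + 1)) := by
    rw [show lam + ↑(2 * k + j + 2) - k = (lam + j + k + 1) + 1 by push_cast; ring,
      show lam + ↑(2 * k + j + 2) - ↑(k + 1) = lam + j + k + 1 by push_cast; ring,
      Real.Gamma_add_one hpos.ne']
  simp only [gegenbauerCoeff, hGamma, Nat.factorial_succ,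
    show 2 * k + j + 2 - 2 * (k + 1) = j by omega, show 2 * k + j + 2 - 2 * k = j + 2 by omega]
  push_cast
  field_simp
  ring

theorem sum_range_add_eq_zero_of_eq_neg {M : Type*} [AddCommGroup M] (N : ℕ) (P Q : ℕ → M)
    (hQ : Q 0 = 0) (hP : P N = 0) (hPQ : ∀ k < N, Q (k + 1) = -P k) :
    ∑ k ∈ Finset.range (N + 1), (P k + Q k) = 0 := by
  rw [Finset.sum_add_distrib, Finset.sum_range_succ, Finset.sum_range_succ' Q, hQ, hP,
    Finset.sum_congr rfl fun k hk => hPQ k (Finset.mem_range.mp hk)]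
  simp

section InnerMonomial

variable {E : Type*} [NormedAddCommGroup E] [InnerProductSpace ℝ E]

/- The factor `⟪w, u⟫ ^ c` absorbs the `⟪w, u⟫` produced by differentiating `⟪w, w⟫` in the
direction `u`, so these functions are closed under `fun f w => fderiv ℝ f w u`. -/
def innerMonomial (ω u : E) (a b c : ℕ) (w : E) : ℝ :=
  ⟪w, ω⟫ ^ a * ⟪w, w⟫ ^ b * ⟪w, u⟫ ^ c

theorem hasFDerivAt_innerMonomial (ω u : E) (a b c : ℕ) (z : E) :
    HasFDerivAt (innerMonomial ω u a b c)
      ((a * ⟪z, ω⟫ ^ (a - 1) * ⟪z, z⟫ ^ b * ⟪z, u⟫ ^ c) • innerSL ℝ ω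
        + (2 * b * ⟪z, ω⟫ ^ a * ⟪z, z⟫ ^ (b - 1) * ⟪z, u⟫ ^ c) • innerSL ℝ z
        + (c * ⟪z, ω⟫ ^ a * ⟪z, z⟫ ^ b * ⟪z, u⟫ ^ (c - 1)) • innerSL ℝ u) z := by
  have hinner (v : E) : HasFDerivAt (fun w : E => ⟪w, v⟫) (innerSL ℝ v) z := by
    convert (innerSL ℝ v).hasFDerivAt using 1
    funext w
    simp [real_inner_comm]
  have hself : HasFDerivAt (fun w : E => ⟪w, w⟫) ((2 : ℝ) • innerSL ℝ z) z := by
    refine ((hasFDerivAt_id z).inner ℝ (hasFDerivAt_id z)).congr_fderiv ?_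
    ext v
    simp [fderivInnerCLM_apply, real_inner_comm, two_mul]
  refine ((((hinner ω).pow a).mul (hself.pow b)).mul ((hinner u).pow c)).congr_fderiv ?_
  ext v
  simp only [add_apply, smul_apply, smul_eq_mul, nsmul_eq_mul, innerSL_apply_apply, Pi.mul_apply]
  ring

theorem fderiv_innerMonomial_apply_self (ω u : E) (a b c : ℕ) (z : E) :
    fderiv ℝ (innerMonomial ω u a b c) z u =
      a * ⟪ω, u⟫ * innerMonomial ω u (a - 1) b c z + 2 * b * innerMonomial ω u a (b - 1) (c + 1) z
        + c * ⟪u, u⟫ * innerMonomial ω u a b (c - 1) z := by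
  simp only [(hasFDerivAt_innerMonomial ω u a b c z).fderiv, innerMonomial,
    add_apply, smul_apply, smul_eq_mul, innerSL_apply_apply]
  ring

theorem fderiv_fderiv_inner_pow_mul_inner_self_pow_apply (ω u : E) (a b : ℕ) (z : E) :
    fderiv ℝ (fun w => fderiv ℝ (fun w => ⟪w, ω⟫ ^ a * ⟪w, w⟫ ^ b) w u) z u =
      ⟪ω, u⟫ ^ 2 * (a * (a - 1) * ⟪z, ω⟫ ^ (a - 2) * ⟪z, z⟫ ^ b)
        + ⟪ω, u⟫ * ⟪z, u⟫ * (4 * a * b * ⟪z, ω⟫ ^ (a - 1) * ⟪z, z⟫ ^ (b - 1))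
        + ⟪z, u⟫ ^ 2 * (4 * b * (b - 1) * ⟪z, ω⟫ ^ a * ⟪z, z⟫ ^ (b - 2))
        + ⟪u, u⟫ * (2 * b * ⟪z, ω⟫ ^ a * ⟪z, z⟫ ^ (b - 1)) := by
  have hmono : (fun w : E => ⟪w, ω⟫ ^ a * ⟪w, w⟫ ^ b) = innerMonomial ω u a b 0 := by
    funext w; simp [innerMonomial]
  have hfirst : (fun w => fderiv ℝ (innerMonomial ω u a b 0) w u) =
      fun w => a * ⟪ω, u⟫ * innerMonomial ω u (a - 1) b 0 w
        + 2 * b * innerMonomial ω u a (b - 1) 1 w := by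
    funext w; simp [fderiv_innerMonomial_apply_self]
  rw [hmono, hfirst, (((hasFDerivAt_innerMonomial ω u (a - 1) b 0 z).const_mul
    (a * ⟪ω, u⟫)).fun_add ((hasFDerivAt_innerMonomial ω u a (b - 1) 1 z).const_mul (2 * b))).fderiv]
  simp only [add_apply, smul_apply, smul_eq_mul, innerSL_apply_apply, Nat.sub_sub, Nat.reduceAdd,
    Nat.sub_self, Nat.cast_zero, Nat.cast_one, pow_zero, pow_one]
  linear_combination
    ⟪ω, u⟫ ^ 2 * ⟪z, ω⟫ ^ (a - 2) * ⟪z, z⟫ ^ b * natCast_mul_natCast_sub_one (R := ℝ) a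
      + 4 * ⟪z, u⟫ ^ 2 * ⟪z, ω⟫ ^ a * ⟪z, z⟫ ^ (b - 2) * natCast_mul_natCast_sub_one (R := ℝ) b

end InnerMonomial

section Euclidean

variable {n : ℕ}

local notation "ℝⁿ" => EuclideanSpace ℝ (Fin n)

open MvPolynomial

theorem laplacianE_const_mul (c : ℝ) (f : ℝⁿ → ℝ) (z : ℝⁿ) :
    laplacianE n (fun w => c * f w) z = c * laplacianE n f z := by
  have hsmul (g : ℝⁿ → ℝ) : fderiv ℝ (fun w => c * g w) = c • fderiv ℝ g :=
    fderiv_const_smul_field (f := g) c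
  simp only [laplacianE, hsmul, Pi.smul_apply, smul_apply, smul_eq_mul, Finset.mul_sum]

theorem laplacianE_sum {ι : Type*} (s : Finset ι) (f : ι → ℝⁿ → ℝ)
    (hf : ∀ i ∈ s, ContDiff ℝ 2 (f i)) (z : ℝⁿ) :
    laplacianE n (fun w => ∑ i ∈ s, f i w) z = ∑ i ∈ s, laplacianE n (f i) z := by
  have hdiff (i) (hi : i ∈ s) (v : ℝⁿ) : Differentiable ℝ (fun w => fderiv ℝ (f i) w v) :=
    ((hf i hi).fderiv_right (m := 1) le_rfl).differentiable one_ne_zero |>.clm_apply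
      (differentiable_const v)
  have hfirst (v : ℝⁿ) : (fun w => fderiv ℝ (fun w => ∑ i ∈ s, f i w) w v) =
      fun w => ∑ i ∈ s, fderiv ℝ (f i) w v := by
    funext w
    rw [fderiv_fun_sum fun i hi => ((hf i hi).differentiable two_ne_zero).differentiableAt,
      sum_apply]
  simp only [laplacianE, hfirst]
  rw [Finset.sum_comm]
  refine Finset.sum_congr rfl fun j _ => ?_
  rw [fderiv_fun_sum fun i hi => (hdiff i hi _).differentiableAt, sum_apply]

theorem laplacianE_inner_pow_mul_inner_self_pow (ω : ℝⁿ) (a b : ℕ) (z : ℝⁿ) :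
    laplacianE n (fun w => ⟪w, ω⟫ ^ a * ⟪w, w⟫ ^ b) z =
      a * (a - 1) * ⟪ω, ω⟫ * ⟪z, ω⟫ ^ (a - 2) * ⟪z, z⟫ ^ b
        + 2 * b * (2 * a + 2 * b + n - 2) * ⟪z, ω⟫ ^ a * ⟪z, z⟫ ^ (b - 1) := by
  have hbasis (x y : ℝⁿ) :
      ∑ i, ⟪x, EuclideanSpace.single i 1⟫ * ⟪y, EuclideanSpace.single i 1⟫ = ⟪x, y⟫ := by
    simpa [real_inner_comm] using (EuclideanSpace.basisFun (Fin n) ℝ).sum_inner_mul_inner x y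
  have hdim : ∑ i : Fin n, ⟪(EuclideanSpace.single i 1 : ℝⁿ), EuclideanSpace.single i 1⟫ = n := by
    simp
  simp only [laplacianE, fderiv_fderiv_inner_pow_mul_inner_self_pow_apply, Finset.sum_add_distrib,
    ← Finset.sum_mul, sq, hbasis, hdim, real_inner_comm z ω]
  linear_combination 4 * b * ⟪z, z⟫ ^ (b - 1) * natCast_mul_pow_sub_one_mul a ⟪z, ω⟫
    + 4 * ⟪z, ω⟫ ^ a * natCast_mul_sub_one_mul_pow_sub_two_mul b ⟪z, z⟫

noncomputable def zonalPolynomial (lam : ℝ) (m : ℕ) (ω : ℝⁿ) : MvPolynomial (Fin n) ℝ :=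
  ∑ k ∈ Finset.range (m / 2 + 1), C (gegenbauerCoeff lam m k) *
    ((∑ i, C (ω i) * X i) ^ (m - 2 * k) * (∑ i, X i ^ 2) ^ k)

theorem eval_zonalPolynomial (lam : ℝ) (m : ℕ) (ω w : ℝⁿ) :
    eval (fun i => w i) (zonalPolynomial lam m ω) =
      ∑ k ∈ Finset.range (m / 2 + 1),
        gegenbauerCoeff lam m k * (⟪w, ω⟫ ^ (m - 2 * k) * ⟪w, w⟫ ^ k) := by
  have hinner (x : ℝⁿ) : ⟪w, x⟫ = ∑ i, x i * w i := by
    simp [PiLp.inner_apply]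
  simp only [hinner, sq, zonalPolynomial, map_sum, map_mul, map_pow, eval_C, eval_X]

theorem eval_smul_zonalPolynomial (lam : ℝ) (m : ℕ) (ω : ℝⁿ) (t : ℝ) (z : ℝⁿ) :
    eval (fun i => t * z i) (zonalPolynomial lam m ω) =
      t ^ m * eval (fun i => z i) (zonalPolynomial lam m ω) := by
  have hsmul : (fun i => t * z i) = fun i => (t • z) i := by
    funext i; simp
  rw [hsmul, eval_zonalPolynomial, eval_zonalPolynomial, Finset.mul_sum]
  refine Finset.sum_congr rfl fun k hk => ?_
  have hk : 2 * k ≤ m := by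
    have := Finset.mem_range.mp hk; omega
  have ht : t ^ m = t ^ (m - 2 * k) * (t ^ 2) ^ k := by
    rw [← pow_mul, ← pow_add]; congr 1; omega
  simp only [real_inner_smul_left, real_inner_smul_right, ht]
  ring

theorem eval_zonalPolynomial_eq_gegenbauer (lam : ℝ) (m : ℕ) (ω : ℝⁿ) {z : ℝⁿ} (hz : z ≠ 0) :
    eval (fun i => z i) (zonalPolynomial lam m ω) = ‖z‖ ^ m * gegenbauer lam m (⟪z, ω⟫ / ‖z‖) := by
  rw [eval_zonalPolynomial, gegenbauer_eq_sum_gegenbauerCoeff, Finset.mul_sum]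
  refine Finset.sum_congr rfl fun k hk => ?_
  have hk : 2 * k ≤ m := by
    have := Finset.mem_range.mp hk; omega
  have hnorm : ‖z‖ ^ m = ‖z‖ ^ (m - 2 * k) * (‖z‖ ^ 2) ^ k := by
    rw [← pow_mul, ← pow_add]; congr 1; omega
  rw [hnorm, real_inner_self_eq_norm_sq, div_pow]
  field_simp

theorem laplacianE_eval_zonalPolynomial (hn : 2 ≤ n) (m : ℕ) {ω : ℝⁿ} (hω : ‖ω‖ = 1) (z : ℝⁿ) :
    laplacianE n (fun w => eval (fun i => w i) (zonalPolynomial (((n : ℝ) - 2) / 2) m ω)) z =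
      0 := by
  have hlam : 0 ≤ ((n : ℝ) - 2) / 2 := by
    have : (2 : ℝ) ≤ n := by exact_mod_cast hn
    linarith
  have hωω : ⟪ω, ω⟫ = 1 := by simp [hω]
  simp only [eval_zonalPolynomial]
  have hsmooth (c : ℝ) (a b : ℕ) : ContDiff ℝ 2 fun w : ℝⁿ => c * (⟪w, ω⟫ ^ a * ⟪w, w⟫ ^ b) :=
    contDiff_const.mul (((contDiff_id.inner ℝ contDiff_const).pow a).mul
      ((contDiff_id.inner ℝ contDiff_id).pow b))
  rw [laplacianE_sum _ _ fun k _ => hsmooth _ _ k]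
  simp only [laplacianE_const_mul, laplacianE_inner_pow_mul_inner_self_pow, hωω, mul_one, mul_add]
  refine sum_range_add_eq_zero_of_eq_neg (m / 2) _ _ ?_ ?_ fun k hk => ?_
  · simp
  · rcases Nat.mod_two_eq_zero_or_one m with hm | hm <;>
      simp [show m - 2 * (m / 2) = m % 2 by omega, hm]
  · have hk' : 2 * (k + 1) ≤ m := by omega
    have hcast : ((m - 2 * (k + 1) : ℕ) : ℝ) = m - 2 * k - 2 := by
      rw [Nat.cast_sub hk']; push_cast; ring
    rw [hcast, show m - 2 * (k + 1) = m - 2 * k - 2 by omega, Nat.add_sub_cancel]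
    push_cast
    linear_combination ⟪z, ω⟫ ^ (m - 2 * k - 2) * ⟪z, z⟫ ^ k *
      gegenbauerCoeff_succ_mul hlam hk'

end Euclidean

/-- Each summand of the multipole expansion of `|z-z'|^{2-n}` is a homogeneous harmonic
polynomial: for a unit vector `ω'` there is a polynomial `p`, homogeneous of degree `m` and
harmonic on all of `ℝⁿ`, with `p(z) = |z|^m C_m^{(n-2)/2}(⟨z,ω'⟩/|z|)` for `z ≠ 0`. -/
theorem multipole_summand_harmonic (n : ℕ) (hn : 3 ≤ n) (m : ℕ)
    (ω' : EuclideanSpace ℝ (Fin n)) (hω' : ‖ω'‖ = 1) :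
    ∃ p : MvPolynomial (Fin n) ℝ,
      (∀ (t : ℝ) (z : EuclideanSpace ℝ (Fin n)),
        MvPolynomial.eval (fun i => t * z i) p = t ^ m * MvPolynomial.eval (fun i => z i) p) ∧
      (∀ z : EuclideanSpace ℝ (Fin n),
        laplacianE n (fun w => MvPolynomial.eval (fun i => w i) p) z = 0) ∧
      (∀ z : EuclideanSpace ℝ (Fin n), z ≠ 0 →
        MvPolynomial.eval (fun i => z i) p =
          ‖z‖ ^ m * gegenbauer (((n : ℝ) - 2) / 2) m (⟪z, ω'⟫ / ‖z‖)) :=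
  ⟨zonalPolynomial _ m ω', eval_smul_zonalPolynomial _ m ω',
    laplacianE_eval_zonalPolynomial (by omega) m hω',
    fun _ hz => eval_zonalPolynomial_eq_gegenbauer _ m ω' hz⟩
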